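/- arXiv:1710.02229 — 3 statements merged into one kernel-verified Lean document; each statement's English description precedes it below -/
import Mathlib

section
/- Let X be a topological space, O a nonempty open subset of X, and τ the collection of all nonempty open subsets of O. Let f : τ → τ be a function such that f(V) ⊆ V for every V ∈ τ. Then there exists a pairwise disjoint collection U of sets, each of the form f(V) for some V ∈ τ, such that the union of U is dense in O. -/
theorem stmt_7 {X : Type*} [TopologicalSpace X]
    (O : Set X) (hO : IsOpen O) (hOne : O.Nonempty)
    (f : Set X → Set X)
    (hf : ∀ V, V ⊆ O → IsOpen V → V.Nonempty →
      f V ⊆ V ∧ IsOpen (f V) ∧ (f V).Nonempty) :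
    ∃ 𝒰 : Set (Set X),
      (∀ W ∈ 𝒰, ∃ V, V ⊆ O ∧ IsOpen V ∧ V.Nonempty ∧ W = f V) ∧
      𝒰.PairwiseDisjoint id ∧
      O ⊆ closure (⋃₀ 𝒰) := by
  set P : Set (Set X) → Prop := fun 𝒰 =>
    (∀ W ∈ 𝒰, ∃ V, V ⊆ O ∧ IsOpen V ∧ V.Nonempty ∧ W = f V) ∧
      𝒰.PairwiseDisjoint id with hP
  obtain ⟨M, hMmax⟩ : ∃ M, Maximal (fun s => P s) M := by
    apply zorn_subset
    intro c hc hchain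
    refine ⟨⋃₀ c, ⟨?_, ?_⟩, fun s hs => Set.subset_sUnion_of_mem hs⟩
    · rintro W ⟨s, hs, hW⟩
      exact (hc hs).1 W hW
    · intro a ha b hb hab
      obtain ⟨s, hs, has⟩ := ha
      obtain ⟨t, ht, hbt⟩ := hb
      rcases hchain.total hs ht with h | h
      · exact (hc ht).2 (h has) hbt hab
      · exact (hc hs).2 has (h hbt) hab
  obtain ⟨⟨hM1, hM2⟩, hmax⟩ := hMmax
  refine ⟨M, hM1, hM2, ?_⟩
  by_contra h
  obtain ⟨x, hxO, hxc⟩ := Set.not_subset.mp h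
  set V : Set X := O \ closure (⋃₀ M) with hV
  have hVO : V ⊆ O := Set.diff_subset
  have hVopen : IsOpen V := hO.sdiff isClosed_closure
  have hVne : V.Nonempty := ⟨x, hxO, hxc⟩
  obtain ⟨hfV1, hfV2, hfV3⟩ := hf V hVO hVopen hVne
  have hdisj : ∀ W ∈ M, Disjoint (f V) W := by
    intro W hW
    refine Set.disjoint_left.mpr fun y hy hyW => ?_
    exact (hfV1 hy).2 (subset_closure (Set.mem_sUnion.mpr ⟨W, hW, hyW⟩))
  have hfVnotM : f V ∉ M := by
    intro hmem
    obtain ⟨y, hy⟩ := hfV3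
    exact (hdisj _ hmem).le_bot ⟨hy, hy⟩
  have hsub : M ⊆ insert (f V) M := Set.subset_insert _ _
  have : P (insert (f V) M) := by
    constructor
    · rintro W (rfl | hW)
      · exact ⟨V, hVO, hVopen, hVne, rfl⟩
      · exact hM1 W hW
    · intro a ha b hb hab
      rcases ha with rfl | ha <;> rcases hb with rfl | hb
      · exact absurd rfl hab
      · exact hdisj b hb
      · exact (hdisj a ha).symm
      · exact hM2 ha hb hab
  exact hfVnotM (hmax this hsub (Set.mem_insert _ _))
end

section
/- Consider the Banach–Mazur game BM(X) on a topological space X: Bob first chooses a nonempty open set U_0 ⊆ X, then Alice chooses a nonempty open V_0 ⊆ U_0, and at stage n Bob chooses nonempty open U_n ⊆ V_{n-1} and Alice chooses nonempty open V_n ⊆ U_n; Bob wins if the intersection of all V_n is nonempty, otherwise Alice wins. If X is meagre (X is a countable union of nowhere dense sets), then Alice has a winning strategy in BM(X). -/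
/-!
Alice answers Bob's `n`-th move `U` with `U \ closure (E n)`, which is a nonempty open set
because `E n` is nowhere dense. Every point of `X` lies in some `E n`, so it is removed at
stage `n` and the intersection of Alice's moves is empty.
-/

open Set

section

variable {X : Type*} [TopologicalSpace X]

lemma IsNowhereDense.diff_closure_nonempty {E U : Set X} (hE : IsNowhereDense E)
    (hU : IsOpen U) (hne : U.Nonempty) : (U \ closure E).Nonempty :=
  (isClosed_isNowhereDense_iff_compl.mp ⟨isClosed_closure, hE.closure⟩).2.inter_open_nonempty
    U hU hne

def removeClosureStrategy (E : ℕ → Set X) (l : List (Set X)) : Set X :=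
  l.getLastD ∅ \ closure (E (l.length - 1))

lemma removeClosureStrategy_of_getLast?_eq {E : ℕ → Set X} {l : List (Set X)} {U : Set X}
    (hl : l.getLast? = some U) : removeClosureStrategy E l = U \ closure (E (l.length - 1)) := by
  rw [removeClosureStrategy, List.getLastD_eq_getLast?, hl, Option.getD_some]

lemma removeClosureStrategy_ofFn (E U : ℕ → Set X) (n : ℕ) :
    removeClosureStrategy E (List.ofFn fun i : Fin (n + 1) => U i.1) = U n \ closure (E n) := by
  rw [removeClosureStrategy_of_getLast?_eq (U := U n), List.length_ofFn, Nat.add_sub_cancel]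
  rw [List.getLast?_eq_some_getLast (by simp), List.getLast_ofFn_succ]
  rfl

lemma iInter_diff_closure_eq_empty {E : ℕ → Set X} (hcover : ⋃ n, E n = univ) (U : ℕ → Set X) :
    ⋂ n, (U n \ closure (E n)) = ∅ := by
  refine eq_empty_of_forall_notMem fun x hx => ?_
  obtain ⟨n, hxn⟩ := mem_iUnion.mp (hcover ▸ mem_univ x)
  exact (mem_iInter.mp hx n).2 (subset_closure hxn)

end

/-- Alice has a winning strategy in the Banach–Mazur game `BM(X)` if `X` is meagre.
A strategy for Alice is a function `σ` from finite sequences of Bob's moves to Alice's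
response; it must respond to any legal position (last Bob move nonempty open) with a
nonempty open subset of that move, and every play following it has empty intersection. -/
theorem stmt_8 {X : Type*} [TopologicalSpace X]
    (E : ℕ → Set X) (hE : ∀ n, IsNowhereDense (E n)) (hcover : (⋃ n, E n) = Set.univ) :
    ∃ σ : List (Set X) → Set X,
      (∀ (l : List (Set X)) (U : Set X), l.getLast? = some U → IsOpen U → U.Nonempty →
        IsOpen (σ l) ∧ (σ l).Nonempty ∧ σ l ⊆ U) ∧
      ∀ U : ℕ → Set X, IsOpen (U 0) → (U 0).Nonempty →
        (∀ n, IsOpen (U (n + 1)) ∧ (U (n + 1)).Nonempty ∧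
          U (n + 1) ⊆ σ (List.ofFn fun i : Fin (n + 1) => U i.1)) →
        (⋂ n, σ (List.ofFn fun i : Fin (n + 1) => U i.1)) = ∅ := by
  refine ⟨removeClosureStrategy E, fun l U hl hU hne => ?_, fun U _ _ _ => ?_⟩
  · rw [removeClosureStrategy_of_getLast?_eq hl]
    exact ⟨hU.sdiff isClosed_closure, (hE _).diff_closure_nonempty hU hne, sdiff_subset⟩
  · simp only [removeClosureStrategy_ofFn]
    exact iInter_diff_closure_eq_empty hcover U
end

section
/- Let X be a Baire space. Then Alice has no winning strategy in the Banach–Mazur game BM(X): for every strategy σ for Alice there exists a play of the game following σ in which the intersection of the chosen open sets is nonempty. -/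
/-!
Oxtoby's argument. By Zorn's lemma, at every position choose a maximal family of legal moves of
Bob whose answers by `σ` are pairwise disjoint. Following these families gives a tree of plays:
by maximality the answers at depth `n` have dense open union, and by disjointness two plays of
depth `n` with intersecting answers agree. A point of the intersection of these dense open sets,
which exists because `X` is Baire, thus determines a single branch of the tree, and it lies in
every answer of `σ` along that branch.
-/

open Set Function

theorem exists_pairwiseDisjoint_forall_inter_nonempty {X : Type*} {P : Set X → Prop}
    {r : Set X → Set X} (hr : ∀ W, P W → (r W).Nonempty ∧ r W ⊆ W) :
    ∃ F : Set (Set X), (∀ W ∈ F, P W) ∧ F.PairwiseDisjoint r ∧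
      ∀ W, P W → ∃ V ∈ F, (W ∩ r V).Nonempty := by
  obtain ⟨F, ⟨hFP, hFr⟩, hFmax⟩ :=
    zorn_subset {F : Set (Set X) | (∀ W ∈ F, P W) ∧ F.PairwiseDisjoint r} fun c hc hchain =>
      ⟨⋃₀ c, ⟨fun W ⟨G, hG, hWG⟩ => (hc hG).1 W hWG,
        (pairwiseDisjoint_sUnion hchain.directedOn).2 fun G hG => (hc hG).2⟩,
        fun _ => subset_sUnion_of_mem⟩
  refine ⟨F, hFP, hFr, fun W hW => ?_⟩
  by_contra! hmiss
  have hWF : W ∉ F := fun hWF =>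
    (hr W hW).1.ne_empty <| inter_eq_right.2 (hr W hW).2 ▸ hmiss W hWF
  have hins : insert W F ∈ {F : Set (Set X) | (∀ W ∈ F, P W) ∧ F.PairwiseDisjoint r} :=
    ⟨forall_mem_insert.2 ⟨hW, hFP⟩, hFr.insert fun V hV _ =>
      (disjoint_iff_inter_eq_empty.2 (hmiss V hV)).mono_left (hr W hW).2⟩
  exact hWF (hFmax hins (subset_insert W F) (mem_insert W F))

namespace BanachMazur

variable {X : Type*}

-- `U k` is Bob's `k`-th move, so Alice's `n`-th answer is `σ (moves U (n + 1))`.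
def moves (U : ℕ → Set X) (n : ℕ) : List (Set X) := List.ofFn fun i : Fin n => U i

@[simp]
lemma moves_zero (U : ℕ → Set X) : moves U 0 = [] := rfl

lemma moves_succ (U : ℕ → Set X) (n : ℕ) : moves U (n + 1) = moves U n ++ [U n] := by
  simp only [moves, List.ofFn_succ', List.concat_eq_append, Fin.val_castSucc, Fin.val_last]

lemma moves_succ_ne_nil (U : ℕ → Set X) (n : ℕ) : moves U (n + 1) ≠ [] := by
  simp [moves_succ]

lemma moves_congr {U U' : ℕ → Set X} {n : ℕ} (h : ∀ k < n, U k = U' k) :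
    moves U n = moves U' n := by
  simp only [moves, List.ofFn_inj]
  exact funext fun i => h i i.2

def Follows (F : List (Set X) → Set (Set X)) (U : ℕ → Set X) (n : ℕ) : Prop :=
  ∀ k < n, U k ∈ F (moves U k)

variable {F : List (Set X) → Set (Set X)} {U U' : ℕ → Set X} {n k : ℕ}

lemma Follows.mono (hU : Follows F U n) (hkn : k ≤ n) : Follows F U k :=
  fun j hj => hU j (hj.trans_le hkn)

lemma follows_succ : Follows F U (n + 1) ↔ Follows F U n ∧ U n ∈ F (moves U n) :=
  Nat.forall_lt_succ_right

lemma Follows.congr (hU : Follows F U n) (h : ∀ k < n, U k = U' k) : Follows F U' n :=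
  fun k hk => h k hk ▸ moves_congr (fun j hj => h j (hj.trans hk)) ▸ hU k hk

variable [TopologicalSpace X]

def IsStrategy (σ : List (Set X) → Set X) : Prop :=
  ∀ (l : List (Set X)) (U : Set X), l.getLast? = some U → IsOpen U → U.Nonempty →
    IsOpen (σ l) ∧ (σ l).Nonempty ∧ σ l ⊆ U

def IsLegalMove (σ : List (Set X) → Set X) (p : List (Set X)) (W : Set X) : Prop :=
  IsOpen W ∧ W.Nonempty ∧ (p ≠ [] → W ⊆ σ p)

structure IsMaximalDisjointTree (σ : List (Set X) → Set X) (F : List (Set X) → Set (Set X)) :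
    Prop where
  legal : ∀ p, ∀ W ∈ F p, IsLegalMove σ p W
  pairwiseDisjoint : ∀ p, (F p).PairwiseDisjoint fun W => σ (p ++ [W])
  meets : ∀ p W, IsLegalMove σ p W → ∃ V ∈ F p, (W ∩ σ (p ++ [V])).Nonempty

variable {σ : List (Set X) → Set X}

lemma IsStrategy.reply (hσ : IsStrategy σ) (p : List (Set X)) {W : Set X} (hW : IsOpen W)
    (hW' : W.Nonempty) : IsOpen (σ (p ++ [W])) ∧ (σ (p ++ [W])).Nonempty ∧ σ (p ++ [W]) ⊆ W :=
  hσ _ _ List.getLast?_concat hW hW'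

lemma IsStrategy.exists_isMaximalDisjointTree (hσ : IsStrategy σ) :
    ∃ F, IsMaximalDisjointTree σ F := by
  choose F hlegal hdisj hmeets using fun p => exists_pairwiseDisjoint_forall_inter_nonempty
    (P := IsLegalMove σ p) (r := fun W => σ (p ++ [W])) fun W hW =>
      ⟨(hσ.reply p hW.1 hW.2.1).2.1, (hσ.reply p hW.1 hW.2.1).2.2⟩
  exact ⟨F, hlegal, hdisj, hmeets⟩

namespace IsMaximalDisjointTree

lemma eq_of_mem_reply_of_moves_eq (hF : IsMaximalDisjointTree σ F) (hU : U n ∈ F (moves U n))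
    (hU' : U' n ∈ F (moves U' n)) (hmoves : moves U n = moves U' n) {x : X}
    (hx : x ∈ σ (moves U (n + 1))) (hx' : x ∈ σ (moves U' (n + 1))) : U n = U' n := by
  rw [moves_succ] at hx
  rw [moves_succ, ← hmoves] at hx'
  by_contra hne
  exact disjoint_left.1 (hF.pairwiseDisjoint _ hU (hmoves ▸ hU') hne) hx hx'

lemma reply (hF : IsMaximalDisjointTree σ F) (hσ : IsStrategy σ) (hU : Follows F U (n + 1)) :
    IsOpen (σ (moves U (n + 1))) ∧ (σ (moves U (n + 1))).Nonempty ∧ σ (moves U (n + 1)) ⊆ U n := by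
  obtain ⟨hUo, hUne, -⟩ := hF.legal _ _ (hU n n.lt_succ_self)
  rw [moves_succ]
  exact hσ.reply _ hUo hUne

lemma reply_antitone (hF : IsMaximalDisjointTree σ F) (hσ : IsStrategy σ)
    (hU : Follows F U (n + 1)) (hkn : k ≤ n) : σ (moves U (n + 1)) ⊆ σ (moves U (k + 1)) := by
  induction n, hkn using Nat.le_induction with
  | base => rfl
  | succ n hkn ih =>
    calc σ (moves U (n + 2)) ⊆ U (n + 1) := (hF.reply hσ hU).2.2
      _ ⊆ σ (moves U (n + 1)) :=
        (hF.legal _ _ (hU (n + 1) n.succ.lt_succ_self)).2.2 (moves_succ_ne_nil U n)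
      _ ⊆ σ (moves U (k + 1)) := ih (hU.mono (n + 1).le_succ)

lemma eq_of_mem_reply (hF : IsMaximalDisjointTree σ F) (hσ : IsStrategy σ)
    (hU : Follows F U (n + 1)) (hU' : Follows F U' (n + 1)) {x : X}
    (hx : x ∈ σ (moves U (n + 1))) (hx' : x ∈ σ (moves U' (n + 1))) : ∀ k < n + 1, U k = U' k := by
  induction n with
  | zero =>
    intro k hk
    obtain rfl := Nat.lt_one_iff.1 hk
    exact hF.eq_of_mem_reply_of_moves_eq (hU 0 one_pos) (hU' 0 one_pos) rfl hx hx'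
  | succ n ih =>
    have hagree := ih (hU.mono (n + 1).le_succ) (hU'.mono (n + 1).le_succ)
      (hF.reply_antitone hσ hU n.le_succ hx) (hF.reply_antitone hσ hU' n.le_succ hx')
    exact Nat.forall_lt_succ_right.2 ⟨hagree, hF.eq_of_mem_reply_of_moves_eq
      (hU _ (n + 1).lt_succ_self) (hU' _ (n + 1).lt_succ_self) (moves_congr hagree) hx hx'⟩

lemma exists_follows_succ (hF : IsMaximalDisjointTree σ F) (hU : Follows F U n) {W : Set X}
    (hW : IsLegalMove σ (moves U n) W) :
    ∃ U', Follows F U' (n + 1) ∧ moves U' n = moves U n ∧ (W ∩ σ (moves U' (n + 1))).Nonempty := by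
  obtain ⟨V, hV, hWV⟩ := hF.meets _ W hW
  have hagree : ∀ k < n, U k = update U n V k := fun k hk => (update_of_ne hk.ne _ _).symm
  have hmoves := moves_congr hagree
  refine ⟨update U n V, follows_succ.2 ⟨hU.congr hagree, ?_⟩, hmoves.symm, ?_⟩
  · rwa [← hmoves, update_self]
  · rwa [moves_succ, ← hmoves, update_self]

lemma isOpen_iUnion_reply (hF : IsMaximalDisjointTree σ F) (hσ : IsStrategy σ) (n : ℕ) :
    IsOpen (⋃ (U) (_ : Follows F U (n + 1)), σ (moves U (n + 1))) :=
  isOpen_iUnion fun _ => isOpen_iUnion fun hU => (hF.reply hσ hU).1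

lemma dense_iUnion_reply (hF : IsMaximalDisjointTree σ F) (hσ : IsStrategy σ) (n : ℕ) :
    Dense (⋃ (U) (_ : Follows F U (n + 1)), σ (moves U (n + 1))) := by
  refine dense_iff_inter_open.2 fun W hWo hWne => ?_
  induction n with
  | zero =>
    obtain ⟨U, hU, -, y, hyW, hyU⟩ := hF.exists_follows_succ (n := 0) (U := fun _ => ∅)
      (fun k hk => absurd hk k.not_lt_zero) ⟨hWo, hWne, fun h => absurd (moves_zero _) h⟩
    exact ⟨y, hyW, mem_iUnion₂.2 ⟨U, hU, hyU⟩⟩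
  | succ n ih =>
    obtain ⟨x, hxW, hx⟩ := ih
    obtain ⟨U, hU, hxU⟩ := mem_iUnion₂.1 hx
    obtain ⟨U', hU', -, y, ⟨hyW, -⟩, hyU'⟩ := hF.exists_follows_succ hU
      ⟨hWo.inter (hF.reply hσ hU).1, ⟨x, hxW, hxU⟩, fun _ => inter_subset_right⟩
    exact ⟨y, hyW, mem_iUnion₂.2 ⟨U', hU', hyU'⟩⟩

lemma exists_follows_of_forall_mem (hF : IsMaximalDisjointTree σ F) (hσ : IsStrategy σ) {x : X}
    (hx : ∀ n, x ∈ ⋃ (U) (_ : Follows F U (n + 1)), σ (moves U (n + 1))) :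
    ∃ U : ℕ → Set X, (∀ k, U k ∈ F (moves U k)) ∧ ∀ n, x ∈ σ (moves U (n + 1)) := by
  choose W hW hxW using fun n => mem_iUnion₂.1 (hx n)
  have hagree : ∀ n k, k ≤ n → ∀ j < k + 1, W n j = W k j := fun n k hkn =>
    hF.eq_of_mem_reply hσ ((hW n).mono (by omega)) (hW k)
      (hF.reply_antitone hσ (hW n) hkn (hxW n)) (hxW k)
  have hmoves : ∀ n m, m ≤ n + 1 → moves (fun j => W j j) m = moves (W n) m := fun n m hm =>
    moves_congr fun j hj => (hagree n j (by omega) j j.lt_succ_self).symm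
  exact ⟨fun j => W j j, fun k => hmoves k k k.le_succ ▸ hW k k k.lt_succ_self,
    fun n => hmoves n (n + 1) le_rfl ▸ hxW n⟩

end IsMaximalDisjointTree

end BanachMazur

open BanachMazur in
/-- If `X` is a (nonempty) Baire space, Alice has no winning strategy in the
Banach–Mazur game: for every strategy `σ` of Alice there is a play following `σ`
whose intersection is nonempty. -/
theorem stmt_10 {X : Type*} [TopologicalSpace X] [BaireSpace X] [Nonempty X]
    (σ : List (Set X) → Set X)
    (hσ : ∀ (l : List (Set X)) (U : Set X), l.getLast? = some U → IsOpen U → U.Nonempty →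
      IsOpen (σ l) ∧ (σ l).Nonempty ∧ σ l ⊆ U) :
    ∃ U : ℕ → Set X, IsOpen (U 0) ∧ (U 0).Nonempty ∧
      (∀ n, IsOpen (U (n + 1)) ∧ (U (n + 1)).Nonempty ∧
        U (n + 1) ⊆ σ (List.ofFn fun i : Fin (n + 1) => U i.1)) ∧
      (⋂ n, σ (List.ofFn fun i : Fin (n + 1) => U i.1)).Nonempty := by
  obtain ⟨F, hF⟩ := IsStrategy.exists_isMaximalDisjointTree hσ
  obtain ⟨x, hx⟩ :=
    (dense_iInter_of_isOpen (hF.isOpen_iUnion_reply hσ) (hF.dense_iUnion_reply hσ)).nonempty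
  obtain ⟨U, hUF, hxU⟩ := hF.exists_follows_of_forall_mem hσ (mem_iInter.1 hx)
  obtain ⟨hU₀o, hU₀ne, -⟩ := hF.legal _ _ (hUF 0)
  refine ⟨U, hU₀o, hU₀ne, fun n => ?_, x, mem_iInter.2 hxU⟩
  obtain ⟨ho, hne, hsub⟩ := hF.legal _ _ (hUF (n + 1))
  exact ⟨ho, hne, hsub (moves_succ_ne_nil U n)⟩
end
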